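/- Let M ∈ SL(n, ℝ) with rows V₁,…,V_n, and let M = N·A·K be its Iwasawa decomposition (N unit upper triangular, A = diag(y₁/y₀, y₂/y₁, …, y_n/y_{n−1}) with y₀ = y_n = 1 and all y_i > 0, K ∈ SO(n)). Then for each μ ∈ {1,…,n−1}, y_μ^{−2} equals the Gram determinant of the rows V_{μ+1},…,V_n, i.e., y_μ^{−2} = det( (V_i · V_j)_{i,j = μ+1,…,n} ). -/

import Mathlib

/-!
Since `K` is orthogonal, `M Mᵀ = N A² Nᵀ`. The Gram matrix of the last `n - μ` rows of `M` is the
corresponding diagonal block of `M Mᵀ`, and because `N` is upper triangular this block factors as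
`N' A'² N'ᵀ` with `N'`, `A'` the lower-right blocks of `N`, `A`. As `N'` is unitriangular, the Gram
determinant is `∏_{i ≥ μ} (y_{i+1} / y_i)² = (y_n / y_μ)² = y_μ⁻²`.
-/

open Finset Matrix

theorem Finset.prod_range_div_of_ne_zero {K : Type*} [Field K] (f : ℕ → K) (n : ℕ)
    (hf : ∀ i ≤ n, f i ≠ 0) : ∏ i ∈ range n, f (i + 1) / f i = f n / f 0 := by
  induction n with
  | zero => simp [div_self (hf 0 le_rfl)]
  | succ n ih =>
    rw [prod_range_succ, ih fun i hi => hf i (by omega)]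
    have hfn : f n ≠ 0 := hf n (by omega)
    field_simp

namespace Matrix

variable {ι κ R : Type*} [Fintype κ] [CommRing R]

theorem mul_diagonal_mul_orthogonal_mul_transpose [Fintype ι] [DecidableEq ι]
    (N K : Matrix ι ι R) (d : ι → R) (hK : K * Kᵀ = 1) :
    N * diagonal d * K * (N * diagonal d * K)ᵀ = N * diagonal (d ^ 2) * Nᵀ := by
  simp only [transpose_mul, diagonal_transpose, Matrix.mul_assoc]
  rw [← Matrix.mul_assoc K, hK, Matrix.one_mul, ← Matrix.mul_assoc (diagonal d),
    diagonal_mul_diagonal, sq]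
  rfl

theorem submatrix_mul_diagonal_mul_transpose [Fintype ι] [DecidableEq ι] [DecidableEq κ]
    (N : Matrix ι ι R) (d : ι → R) {e : κ → ι} (he : Function.Injective e)
    (hN : ∀ i k, k ∉ Set.range e → N (e i) k = 0) :
    (N * diagonal d * Nᵀ).submatrix e e =
      N.submatrix e e * diagonal (d ∘ e) * (N.submatrix e e)ᵀ := by
  ext i j
  rw [submatrix_apply, mul_apply, mul_apply]
  simp only [mul_diagonal, transpose_apply, submatrix_apply, Function.comp_apply]
  refine (Fintype.sum_of_injective e he _ _ (fun k hk => ?_) fun _ => rfl).symm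
  rw [hN i k hk, zero_mul, zero_mul]

theorem det_submatrix_eq_one_of_isUpperTriangular [LinearOrder ι] [LinearOrder κ]
    {N : Matrix ι ι R} (hN : N.IsUpperTriangular) (hNd : ∀ i, N i i = 1)
    {e : κ → ι} (he : StrictMono e) : (N.submatrix e e).det = 1 := by
  rw [det_of_isUpperTriangular (M := N.submatrix e e) fun i j hij => hN (he hij)]
  simp [hNd]

end Matrix

/-- In the Iwasawa decomposition of `M ∈ SL(n, ℝ)` with dilatons `y`, `y_μ⁻²` equals the
Gram determinant of the rows `V_{μ+1}, …, V_n` of `M`. -/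
theorem stmt_12 (n : ℕ) (M N A K : Matrix (Fin n) (Fin n) ℝ)
    (hdec : M = N * A * K)
    (hNd : ∀ i, N i i = 1) (hN0 : ∀ i j : Fin n, j < i → N i j = 0)
    (y : ℕ → ℝ) (hyn : y n = 1) (hypos : ∀ i, i ≤ n → 0 < y i)
    (hA : ∀ i j : Fin n, i ≠ j → A i j = 0)
    (hAy : ∀ i : Fin n, A i i = y (i.1 + 1) / y i.1)
    (hK : K * K.transpose = 1) :
    ∀ μ : ℕ, (hμ1 : 1 ≤ μ) → (hμ2 : μ ≤ n - 1) →
      ((y μ)⁻¹) ^ 2 =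
        (Matrix.of fun i j : Fin (n - μ) =>
          ∑ t : Fin n,
            M ⟨μ + i.1, by have := i.2; omega⟩ t *
            M ⟨μ + j.1, by have := j.2; omega⟩ t).det := by
  intro μ _ hμ2
  let e : Fin (n - μ) → Fin n := fun i => ⟨μ + i, by omega⟩
  have he : StrictMono e := fun i j hij => Fin.mk_lt_mk.mpr (by have := Fin.lt_def.mp hij; omega)
  have hgram : (Matrix.of fun i j : Fin (n - μ) => ∑ t, M (e i) t * M (e j) t) =
      (M * Mᵀ).submatrix e e := by
    ext i j
    simp only [of_apply, submatrix_apply, mul_apply, transpose_apply]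
  have hNe : ∀ i k, k ∉ Set.range e → N (e i) k = 0 := fun i k hk => by
    have hkμ : (k : ℕ) < μ := by
      by_contra! h
      exact hk ⟨⟨k - μ, by omega⟩, Fin.ext (by simp only [e]; omega)⟩
    exact hN0 _ _ (Fin.lt_def.mpr (by simp only [e]; omega))
  have hprod : ∏ i : Fin (n - μ), A (e i) (e i) = (y μ)⁻¹ := by
    simp only [hAy, e]
    rw [Fin.prod_univ_eq_prod_range (fun i => y (μ + i + 1) / y (μ + i))]
    refine (prod_range_div_of_ne_zero (fun k => y (μ + k)) _ fun i hi =>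
      (hypos _ (by omega)).ne').trans ?_
    rw [Nat.add_sub_cancel' (by omega), hyn, add_zero, one_div]
  rw [← (isDiag_iff_diagonal_diag A).mp fun i j h => hA i j h] at hdec
  change _ = (Matrix.of fun i j : Fin (n - μ) => ∑ t, M (e i) t * M (e j) t).det
  rw [hgram, hdec, mul_diagonal_mul_orthogonal_mul_transpose _ _ _ hK,
    submatrix_mul_diagonal_mul_transpose _ _ he.injective hNe, det_mul, det_mul, det_transpose,
    det_submatrix_eq_one_of_isUpperTriangular (fun i j h => hN0 i j h) hNd he, det_diagonal,
    one_mul, mul_one, ← hprod, ← prod_pow]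
  rfl
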